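/- arXiv:1607.03792 — 2 statements merged into one kernel-verified Lean document; each statement's English description precedes it below -/
import Mathlib

section
/- Let K be a d-dimensional smoothing kernel satisfying ∫₀^∞ K(t) t^{β+d-1} dt < ∞ for some β > 0. Then for any probability measure Q on ℝ^d, h > 0, and r ≥ 1, ∫_{‖x‖ > r} (h^{-d} ∫_{ℝ^d} K(‖x − x'‖/h) dQ(x')) dx ≤ C (Q({x : ‖x‖ > r/2}) + (h/r)^β), where C is a constant depending only on K, d, β. -/
/-!
With `K_h z = h⁻ᵈ K (‖z‖ / h)` the smoothing is `x ↦ ∫ K_h (x - y) dQ(y)` and `∫ K_h = 1`.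
By Tonelli the mass outside `B_r` is `∫ (∫_{‖x‖ > r} K_h (x - y) dx) dQ(y)`. For `‖y‖ > r/2` the
inner integral is at most `1`; for `‖y‖ ≤ r/2` every `x` with `‖x‖ > r` has `‖x - y‖ > r/2`, so
it is at most the tail `∫_{‖z‖ > r/2} K_h = ∫_{‖z‖ > r/(2h)} K (‖z‖)`. In polar coordinates this
tail is `d |B₁| ∫_{r/(2h)}^∞ K(t) t^(d-1) dt ≤ d |B₁| (2h/r)^β ∫₀^∞ K(t) t^(β+d-1) dt`.
-/

open MeasureTheory Set Metric Module
open scoped ENNReal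

section Translation

variable {E : Type*} [NormedAddCommGroup E] [MeasurableSpace E] [BorelSpace E] (μ : Measure E)

theorem setIntegral_norm_gt_eq_integral_indicator (G : ℝ → ℝ) (R : ℝ) :
    ∫ x in {x | R < ‖x‖}, G ‖x‖ ∂μ = ∫ x, (Ioi R).indicator G ‖x‖ ∂μ := by
  rw [← integral_indicator (measurableSet_lt measurable_const measurable_norm)]
  rfl

variable [μ.IsAddRightInvariant]

theorem setLIntegral_norm_gt_comp_sub_le (k : E → ℝ≥0∞) (r : ℝ) (y : E) :
    ∫⁻ x in {x | r < ‖x‖}, k (x - y) ∂μ ≤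
      {z | r / 2 < ‖z‖}.indicator (fun _ ↦ ∫⁻ z, k z ∂μ) y +
        ∫⁻ z in {z | r / 2 < ‖z‖}, k z ∂μ := by
  set H := {z : E | r / 2 < ‖z‖}
  by_cases hy : y ∈ H
  · rw [indicator_of_mem hy]
    calc ∫⁻ x in {x | r < ‖x‖}, k (x - y) ∂μ ≤ ∫⁻ x, k (x - y) ∂μ :=
          setLIntegral_le_lintegral _ _
      _ = ∫⁻ z, k z ∂μ := lintegral_sub_right_eq_self k y
      _ ≤ _ := le_self_add
  · have hshift : ∀ x ∈ {x : E | r < ‖x‖}, k (x - y) = H.indicator k (x - y) := by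
      intro x (hx : r < ‖x‖)
      have hxy : r / 2 < ‖x - y‖ := by
        linarith [norm_sub_norm_le x y, not_lt.1 (show ¬r / 2 < ‖y‖ from hy)]
      exact (indicator_of_mem (show x - y ∈ H from hxy) k).symm
    rw [indicator_of_notMem hy, zero_add, setLIntegral_congr_fun
      (measurableSet_lt measurable_const measurable_norm) hshift,
      ← lintegral_indicator (measurableSet_lt measurable_const measurable_norm) k,
      ← lintegral_sub_right_eq_self (H.indicator k) y]
    exact setLIntegral_le_lintegral _ _

variable [SecondCountableTopology E] [SFinite μ]

theorem setLIntegral_norm_gt_lintegral_comp_sub_le (Q : Measure E) [SFinite Q]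
    {k : E → ℝ≥0∞} (hk : Measurable k) (r : ℝ) :
    ∫⁻ x in {x | r < ‖x‖}, ∫⁻ y, k (x - y) ∂Q ∂μ ≤
      Q {y | r / 2 < ‖y‖} * ∫⁻ z, k z ∂μ + Q univ * ∫⁻ z in {z | r / 2 < ‖z‖}, k z ∂μ := by
  rw [lintegral_lintegral_swap (f := fun x y ↦ k (x - y))
    (hk.comp measurable_sub).aemeasurable]
  calc ∫⁻ y, ∫⁻ x in {x | r < ‖x‖}, k (x - y) ∂μ ∂Q
      ≤ ∫⁻ y, ({z | r / 2 < ‖z‖}.indicator (fun _ ↦ ∫⁻ z, k z ∂μ) y +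
          ∫⁻ z in {z | r / 2 < ‖z‖}, k z ∂μ) ∂Q :=
        lintegral_mono fun y ↦ setLIntegral_norm_gt_comp_sub_le μ k r y
    _ = _ := by
      rw [lintegral_add_right _ measurable_const,
        lintegral_indicator (measurableSet_lt measurable_const measurable_norm),
        setLIntegral_const, lintegral_const, mul_comm, mul_comm (∫⁻ z in _, k z ∂μ)]

end Translation

theorem integral_integral_le_toReal_lintegral_lintegral {α β : Type*} [MeasurableSpace α]
    [MeasurableSpace β] {μ : Measure α} {ν : Measure β} {f : α → β → ℝ}
    (hfin : ∫⁻ x, ∫⁻ y, ‖f x y‖ₑ ∂ν ∂μ ≠ ∞) :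
    ∫ x, ∫ y, f x y ∂ν ∂μ ≤ (∫⁻ x, ∫⁻ y, ‖f x y‖ₑ ∂ν ∂μ).toReal := by
  calc ∫ x, ∫ y, f x y ∂ν ∂μ ≤ ‖∫ x, ∫ y, f x y ∂ν ∂μ‖ₑ.toReal := by
        rw [toReal_enorm]; exact Real.le_norm_self _
    _ ≤ _ := ENNReal.toReal_mono hfin <| (enorm_integral_le_lintegral_enorm _).trans <|
        lintegral_mono fun x ↦ enorm_integral_le_lintegral_enorm _

section Radial

variable {E : Type*} [NormedAddCommGroup E] [NormedSpace ℝ E] [FiniteDimensional ℝ E]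
  [MeasurableSpace E] [BorelSpace E] (μ : Measure E) [μ.IsAddHaarMeasure]

theorem integral_comp_norm_div (G : ℝ → ℝ) {h : ℝ} (hh : 0 < h) :
    ∫ x, G (‖x‖ / h) ∂μ = h ^ finrank ℝ E * ∫ x, G ‖x‖ ∂μ := by
  have := Measure.integral_comp_inv_smul_of_nonneg μ (fun x ↦ G ‖x‖) hh.le
  simpa [norm_smul, abs_of_pos hh, div_eq_inv_mul] using this

theorem setIntegral_norm_gt_comp_norm_div (G : ℝ → ℝ) {h : ℝ} (hh : 0 < h) (ρ : ℝ) :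
    ∫ x in {x | ρ < ‖x‖}, G (‖x‖ / h) ∂μ =
      h ^ finrank ℝ E * ∫ x in {x | ρ / h < ‖x‖}, G ‖x‖ ∂μ := by
  calc ∫ x in {x | ρ < ‖x‖}, G (‖x‖ / h) ∂μ = ∫ x, (Ioi (ρ / h)).indicator G (‖x‖ / h) ∂μ := by
        rw [← integral_indicator (measurableSet_lt measurable_const measurable_norm)]
        congr 1 with x
        simp only [indicator, mem_ofPred_eq, mem_Ioi, div_lt_div_iff_of_pos_right hh]
    _ = _ := by
      rw [integral_comp_norm_div μ _ hh, setIntegral_norm_gt_eq_integral_indicator]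

theorem setIntegral_norm_gt_le_rpow_mul_moment [Nontrivial E] {K : ℝ → ℝ} (hK : ∀ t, 0 ≤ K t)
    {β : ℝ} (hβ : 0 ≤ β)
    (hmom : IntegrableOn (fun t ↦ K t * t ^ (β + finrank ℝ E - 1)) (Ioi 0)) {R : ℝ} (hR : 0 < R) :
    ∫ x in {x | R < ‖x‖}, K ‖x‖ ∂μ ≤
      R ^ (-β) * (finrank ℝ E * μ.real (ball 0 1) *
        ∫ t in Ioi 0, K t * t ^ (β + finrank ℝ E - 1)) := by
  set n := finrank ℝ E
  have hpt : ∀ t ∈ Ioi (0 : ℝ),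
      t ^ (n - 1) * (Ioi R).indicator K t ≤ R ^ (-β) * (K t * t ^ (β + n - 1)) := by
    intro t (ht : 0 < t)
    by_cases htR : R < t
    · have hpow : t ^ (β + n - 1) = t ^ β * t ^ (n - 1) := by
        rw [add_sub_assoc, Real.rpow_add ht, ← Nat.cast_pred finrank_pos, Real.rpow_natCast]
      have hscale : 1 ≤ R ^ (-β) * t ^ β := by
        rw [Real.rpow_neg hR.le, ← div_eq_inv_mul, ← Real.div_rpow ht.le hR.le]
        exact Real.one_le_rpow ((one_le_div hR).2 htR.le) hβ
      rw [indicator_of_mem (show t ∈ Ioi R from htR), hpow]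
      have := mul_nonneg (hK t) (pow_nonneg ht.le (n - 1))
      nlinarith
    · rw [indicator_of_notMem (show t ∉ Ioi R from htR), mul_zero]
      exact mul_nonneg (Real.rpow_nonneg hR.le _) (mul_nonneg (hK t) (Real.rpow_nonneg ht.le _))
  have hradial : ∫ t in Ioi 0, t ^ (n - 1) • (Ioi R).indicator K t ≤
      R ^ (-β) * ∫ t in Ioi 0, K t * t ^ (β + n - 1) := by
    rw [← integral_const_mul]
    refine integral_mono_of_nonneg ?_ (hmom.const_mul _) ?_
    · filter_upwards [ae_restrict_mem measurableSet_Ioi] with t (ht : 0 < t)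
      exact mul_nonneg (pow_nonneg ht.le _) (indicator_nonneg (fun t _ ↦ hK t) t)
    · filter_upwards [ae_restrict_mem measurableSet_Ioi] with t ht
      exact hpt t ht
  rw [setIntegral_norm_gt_eq_integral_indicator, integral_fun_norm_addHaar, nsmul_eq_mul,
    smul_eq_mul]
  calc (n : ℝ) * (μ.real (ball 0 1) * ∫ t in Ioi 0, t ^ (n - 1) • (Ioi R).indicator K t)
      ≤ n * (μ.real (ball 0 1) * (R ^ (-β) * ∫ t in Ioi 0, K t * t ^ (β + n - 1))) := by
        gcongr
    _ = _ := by ring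

noncomputable def rescaledKernel (K : ℝ → ℝ) (h : ℝ) (z : E) : ℝ :=
  (h ^ finrank ℝ E)⁻¹ * K (‖z‖ / h)

variable {K : ℝ → ℝ} {h : ℝ}

omit [FiniteDimensional ℝ E] in
theorem measurable_rescaledKernel (hK : AntitoneOn K (Ici 0)) (hh : 0 ≤ h) :
    Measurable (rescaledKernel K h : E → ℝ) := by
  have hKmax : Measurable fun t ↦ K (max t 0) := Antitone.measurable fun a b hab ↦
    hK (le_max_right a 0) (le_max_right b 0) (max_le_max hab le_rfl)
  have : rescaledKernel K h = fun z : E ↦ (h ^ finrank ℝ E)⁻¹ * K (max (‖z‖ / h) 0) := by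
    ext z
    rw [rescaledKernel, max_eq_left (by positivity)]
  rw [this]
  exact (hKmax.comp (measurable_norm.div_const h)).const_mul _

theorem integrable_rescaledKernel (hK : Integrable (fun x ↦ K ‖x‖) μ) (hh : 0 < h) :
    Integrable (rescaledKernel K h) μ := by
  have := (hK.comp_smul (inv_ne_zero hh.ne')).const_mul (h ^ finrank ℝ E)⁻¹
  unfold rescaledKernel
  simpa [norm_smul, abs_of_pos hh, div_eq_inv_mul] using this

theorem integral_rescaledKernel (hh : 0 < h) :
    ∫ z, rescaledKernel K h z ∂μ = ∫ z, K ‖z‖ ∂μ := by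
  unfold rescaledKernel
  rw [integral_const_mul, integral_comp_norm_div μ K hh, inv_mul_cancel_left₀ (by positivity)]

theorem setIntegral_rescaledKernel_norm_gt_le [Nontrivial E] (hK : ∀ t, 0 ≤ K t) {β : ℝ}
    (hβ : 0 ≤ β)
    (hmom : IntegrableOn (fun t ↦ K t * t ^ (β + finrank ℝ E - 1)) (Ioi 0)) (hh : 0 < h)
    {ρ : ℝ} (hρ : 0 < ρ) :
    ∫ z in {z | ρ < ‖z‖}, rescaledKernel K h z ∂μ ≤
      (h / ρ) ^ β * (finrank ℝ E * μ.real (ball 0 1) *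
        ∫ t in Ioi 0, K t * t ^ (β + finrank ℝ E - 1)) := by
  unfold rescaledKernel
  rw [integral_const_mul, setIntegral_norm_gt_comp_norm_div μ K hh,
    inv_mul_cancel_left₀ (by positivity)]
  convert setIntegral_norm_gt_le_rpow_mul_moment μ hK hβ hmom (div_pos hρ hh) using 2
  rw [Real.rpow_neg (by positivity), ← Real.inv_rpow (by positivity), inv_div]

theorem setLIntegral_norm_gt_lintegral_rescaledKernel_le [Nontrivial E] (Q : Measure E)
    [IsProbabilityMeasure Q] (hK_nonneg : ∀ t, 0 ≤ K t) (hK_anti : AntitoneOn K (Ici 0))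
    (hK_int : Integrable (fun x ↦ K ‖x‖) μ) {β : ℝ} (hβ : 0 ≤ β)
    (hmom : IntegrableOn (fun t ↦ K t * t ^ (β + finrank ℝ E - 1)) (Ioi 0)) (hh : 0 < h)
    {r : ℝ} (hr : 0 < r) :
    ∫⁻ x in {x | r < ‖x‖}, ∫⁻ y, ‖rescaledKernel K h (x - y)‖ₑ ∂Q ∂μ ≤
      Q {y | r / 2 < ‖y‖} * ENNReal.ofReal (∫ z, K ‖z‖ ∂μ) +
        ENNReal.ofReal ((h / (r / 2)) ^ β * (finrank ℝ E * μ.real (ball 0 1) *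
          ∫ t in Ioi 0, K t * t ^ (β + finrank ℝ E - 1))) := by
  have hint := integrable_rescaledKernel μ hK_int hh
  have hnonneg : 0 ≤ (rescaledKernel K h : E → ℝ) :=
    fun z ↦ mul_nonneg (inv_nonneg.2 (by positivity)) (hK_nonneg _)
  have hmass : ∫⁻ z, ‖rescaledKernel K h z‖ₑ ∂μ = ENNReal.ofReal (∫ z, K ‖z‖ ∂μ) := by
    rw [lintegral_enorm_of_nonneg hnonneg,
      ← ofReal_integral_eq_lintegral_ofReal hint (ae_of_all _ hnonneg),
      integral_rescaledKernel μ hh]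
  have htail : ∫⁻ z in {z | r / 2 < ‖z‖}, ‖rescaledKernel K h z‖ₑ ∂μ ≤
      ENNReal.ofReal ((h / (r / 2)) ^ β * (finrank ℝ E * μ.real (ball 0 1) *
        ∫ t in Ioi 0, K t * t ^ (β + finrank ℝ E - 1))) := by
    rw [lintegral_enorm_of_nonneg hnonneg,
      ← ofReal_integral_eq_lintegral_ofReal hint.integrableOn (ae_of_all _ hnonneg)]
    exact ENNReal.ofReal_le_ofReal
      (setIntegral_rescaledKernel_norm_gt_le μ hK_nonneg hβ hmom hh (half_pos hr))
  calc _ ≤ _ := setLIntegral_norm_gt_lintegral_comp_sub_le μ Q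
        (measurable_rescaledKernel hK_anti hh.le).enorm r
    _ ≤ _ := by rw [hmass, measure_univ, one_mul]; gcongr

end Radial

theorem stmt5_general (d : ℕ) (hd : 1 ≤ d) (K : ℝ → ℝ) (β : ℝ) (hβ : 0 < β)
    (hK_nonneg : ∀ r, 0 ≤ K r)
    (hK_anti : AntitoneOn K (Set.Ici (0 : ℝ)))
    (hK_int : Integrable (fun x : EuclideanSpace ℝ (Fin d) => K ‖x‖))
    (hK_one : ∫ x : EuclideanSpace ℝ (Fin d), K ‖x‖ = 1)
    (hK_moment : IntegrableOn (fun t : ℝ => K t * t ^ (β + d - 1)) (Set.Ioi 0)) :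
    ∃ C > 0, ∀ (Q : Measure (EuclideanSpace ℝ (Fin d))), IsProbabilityMeasure Q →
      ∀ (h r : ℝ), 0 < h → 1 ≤ r →
        ∫ x in {x : EuclideanSpace ℝ (Fin d) | r < ‖x‖},
            (h ^ d)⁻¹ * ∫ x', K (‖x - x'‖ / h) ∂Q
          ≤ C * ((Q {x : EuclideanSpace ℝ (Fin d) | r / 2 < ‖x‖}).toReal + (h / r) ^ β) := by
  have : Nontrivial (EuclideanSpace ℝ (Fin d)) := by
    rw [← finrank_pos_iff (R := ℝ), finrank_euclideanSpace_fin]; omega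
  set A := d * volume.real (ball (0 : EuclideanSpace ℝ (Fin d)) 1) *
    ∫ t in Ioi 0, K t * t ^ (β + d - 1)
  have hA : 0 ≤ A := mul_nonneg (by positivity) <| setIntegral_nonneg measurableSet_Ioi
    fun t ht ↦ mul_nonneg (hK_nonneg t) (Real.rpow_nonneg (le_of_lt ht) _)
  refine ⟨1 + 2 ^ β * A, by positivity, fun Q _ h r hh hr ↦ ?_⟩
  have hmom : IntegrableOn (fun t ↦ K t * t ^ (β + finrank ℝ (EuclideanSpace ℝ (Fin d)) - 1))
      (Ioi 0) := by rwa [finrank_euclideanSpace_fin]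
  have key := setLIntegral_norm_gt_lintegral_rescaledKernel_le volume Q hK_nonneg hK_anti hK_int
    hβ.le hmom hh (zero_lt_one.trans_le hr)
  rw [hK_one, ENNReal.ofReal_one, mul_one, finrank_euclideanSpace_fin] at key
  have hsmooth : ∀ x, (h ^ d)⁻¹ * ∫ x', K (‖x - x'‖ / h) ∂Q =
      ∫ x', rescaledKernel K h (x - x') ∂Q := fun x ↦ by
    simp only [rescaledKernel, finrank_euclideanSpace_fin, integral_const_mul]
  have hscale : (h / (r / 2)) ^ β = 2 ^ β * (h / r) ^ β := by
    rw [← Real.mul_rpow zero_le_two (by positivity)]; ring_nf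
  simp_rw [hsmooth]
  calc _ ≤ _ := integral_integral_le_toReal_lintegral_lintegral (ne_top_of_le_ne_top
        (by finiteness) key)
    _ ≤ _ := ENNReal.toReal_mono (by finiteness) key
    _ = (Q {x | r / 2 < ‖x‖}).toReal + 2 ^ β * (h / r) ^ β * A := by
      rw [ENNReal.toReal_add (by finiteness) ENNReal.ofReal_ne_top,
        ENNReal.toReal_ofReal (by positivity), hscale]
    _ ≤ _ := by
      have := ENNReal.toReal_nonneg (a := Q {x | r / 2 < ‖x‖})
      nlinarith [mul_nonneg (mul_nonneg (Real.rpow_nonneg zero_le_two β) hA) this,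
        Real.rpow_nonneg (by positivity : 0 ≤ h / r) β]

/-- Tail bound for the K-smoothing of a probability measure `Q`:
`∫_{‖x‖ > r} f_{Q,h}(x) dx ≤ C (Q(H_{r/2}) + (h/r)^β)`. -/
theorem stmt5 (d : ℕ) (hd : 1 ≤ d) (K : ℝ → ℝ) (β : ℝ) (hβ : 0 < β)
    (hK_nonneg : ∀ r, 0 ≤ K r)
    (hK_bdd : ∃ M, ∀ r, K r ≤ M)
    (hK_anti : AntitoneOn K (Set.Ici (0 : ℝ)))
    (hK_int : Integrable (fun x : EuclideanSpace ℝ (Fin d) => K ‖x‖))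
    (hK_one : ∫ x : EuclideanSpace ℝ (Fin d), K ‖x‖ = 1)
    (hK_moment : IntegrableOn (fun t : ℝ => K t * t ^ (β + d - 1)) (Set.Ioi 0)) :
    ∃ C > 0, ∀ (Q : Measure (EuclideanSpace ℝ (Fin d))), IsProbabilityMeasure Q →
      ∀ (h r : ℝ), 0 < h → 1 ≤ r →
        ∫ x in {x : EuclideanSpace ℝ (Fin d) | r < ‖x‖},
            (h ^ d)⁻¹ * ∫ x', K (‖x - x'‖ / h) ∂Q
          ≤ C * ((Q {x : EuclideanSpace ℝ (Fin d) | r / 2 < ‖x‖}).toReal + (h / r) ^ β) :=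
  stmt5_general d hd K β hβ hK_nonneg hK_anti hK_int hK_one hK_moment
end

section
/- Let K be β-Hölder continuous with constant c, h ∈ (0,1], r ≥ 1, and consider K_{h,r} := {k_{x,h} : x ∈ B_r} ⊂ L_∞(ℝ^d), where k_{x,h}(y) = h^{-d}K(‖x−y‖/h) and B_r = {x : ‖x‖ ≤ r}. Then there is a constant c' > 0 (independent of ε, h, r) such that for all ε ∈ (0,1]: N(K_{h,r}, ‖·‖_∞, ε) ≤ c' r^d h^{-d - d²/β} ε^{-d/β}. -/
/-!
Cover the Euclidean ball `B_r` by a grid of mesh `≍ δ / √d`, which has `≍ (r / δ)^d` points, and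
move the grid points into `B_r` at the cost of doubling the radius. Since
`|k_{x,h}(y) - k_{x',h}(y)| ≤ c h^{-(β+d)} ‖x - x'‖^β`, a `δ`-net of `B_r` yields an `ε`-net of
kernels once `c h^{-(β+d)} δ^β = ε`, and then `(r / δ)^d = c^{d/β} r^d h^{-d-d²/β} ε^{-d/β}`.
-/

open Metric Set
open scoped NNReal

lemma Metric.IsCover.exists_finset_subset_two_mul {X : Type*} [PseudoEMetricSpace X]
    {ε : ℝ≥0} {A : Set X} {T : Finset X} (hT : IsCover ε A T) :
    ∃ S : Finset X, ↑S ⊆ A ∧ S.card ≤ T.card ∧ IsCover (2 * ε) A S := by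
  have hcov : coveringNumber (2 * ε) A ≤ T.card :=
    (coveringNumber_two_mul_le_externalCoveringNumber ε A).trans
      (by simpa using hT.externalCoveringNumber_le_encard)
  obtain ⟨C, hCA, hC, hCcover, hCcard⟩ :=
    exists_set_encard_eq_coveringNumber (ne_top_of_le_ne_top (by simp) hcov)
  refine ⟨hC.toFinset, by simpa using hCA, ?_, by simpa using hCcover⟩
  rw [← hCcard, hC.encard_eq_coe_toFinset_card] at hcov
  exact_mod_cast hcov

lemma abs_round_le_of_abs_le {α : Type*} [Field α] [LinearOrder α] [IsStrictOrderedRing α]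
    [FloorRing α] {t : α} {N : ℤ} (ht : |t| ≤ N) : |round t| ≤ N := by
  have : |(round t : α)| < N + 1 := by
    linarith [abs_sub_abs_le_abs_sub (round t : α) t, abs_sub_comm (round t : α) t,
      abs_sub_round t]
  exact Int.lt_add_one_iff.mp (by exact_mod_cast this)

lemma exists_finset_isCover_closedBall_pi (ι : Type*) [Fintype ι] {r : ℝ} (hr : 0 ≤ r)
    {ε : ℝ≥0} (hε : 0 < ε) :
    ∃ T : Finset (ι → ℝ), (T.card : ℝ) ≤ (r / ε + 3) ^ Fintype.card ι ∧
      IsCover ε (closedBall 0 r) (T : Set (ι → ℝ)) := by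
  classical
  set N : ℕ := ⌈r / (2 * ε)⌉₊
  let grid : (ι → ℤ) → ι → ℝ := fun z i => 2 * ε * z i
  refine ⟨(Fintype.piFinset fun _ => Finset.Icc (-(N : ℤ)) N).image grid, ?_, ?_⟩
  · have hN : (2 * N + 1 : ℝ) ≤ r / ε + 3 := by
      have := Nat.ceil_lt_add_one (show 0 ≤ r / (2 * ε) by positivity)
      have hhalf : r / (2 * ε) = r / ε / 2 := by ring
      linarith
    calc (_ : ℝ) ≤ (2 * N + 1 : ℝ) ^ Fintype.card ι := by
          grw [Finset.card_image_le]
          simp only [Fintype.card_piFinset, Int.card_Icc, Finset.prod_const, Finset.card_univ]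
          rw [show ((N : ℤ) + 1 - -N).toNat = 2 * N + 1 by omega]
          push_cast; rfl
      _ ≤ _ := by gcongr
  · intro x hx
    have hε2 : (0 : ℝ) < 2 * ε := by positivity
    let z : ι → ℤ := fun i => round (x i / (2 * ε))
    refine ⟨grid z, Finset.mem_image_of_mem grid ?_, ?_⟩
    · refine Fintype.mem_piFinset.mpr fun i => Finset.mem_Icc.mpr (abs_le.mp ?_)
      refine abs_round_le_of_abs_le ?_
      rw [abs_div, abs_of_pos hε2]
      calc |x i| / (2 * ε) ≤ r / (2 * ε) := by
            gcongr
            simpa using (norm_le_pi_norm x i).trans (mem_closedBall_zero_iff.mp hx)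
        _ ≤ N := Nat.le_ceil _
    · show edist x (grid z) ≤ ε
      rw [edist_le_coe, ← NNReal.coe_le_coe, coe_nndist]
      refine (dist_pi_le_iff ε.2).mpr fun i => ?_
      rw [Real.dist_eq]
      have := abs_sub_round (x i / (2 * ε))
      calc |x i - grid z i| = 2 * ε * |x i / (2 * ε) - round (x i / (2 * ε))| := by
            rw [← abs_of_pos hε2, ← abs_mul, abs_of_pos hε2]
            congr 1
            simp only [grid, z]
            field_simp
        _ ≤ ε := by nlinarith

lemma EuclideanSpace.closedBall_zero_subset_image_toLp (ι : Type*) [Fintype ι] (r : ℝ) :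
    closedBall (0 : EuclideanSpace ℝ ι) r ⊆ WithLp.toLp 2 '' closedBall (0 : ι → ℝ) r := by
  intro x hx
  refine ⟨WithLp.ofLp x, mem_closedBall_zero_iff.mpr ?_, WithLp.toLp_ofLp 2 x⟩
  have hr : 0 ≤ r := nonneg_of_mem_closedBall hx
  exact (pi_norm_le_iff_of_nonneg hr).mpr fun i =>
    (PiLp.norm_apply_le x i).trans (mem_closedBall_zero_iff.mp hx)

lemma EuclideanSpace.exists_finset_subset_closedBall_isCover (ι : Type*) [Fintype ι] {r : ℝ}
    (hr : 0 ≤ r) {δ : ℝ≥0} (hδ : 0 < δ) :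
    ∃ S : Finset (EuclideanSpace ℝ ι), (S : Set (EuclideanSpace ℝ ι)) ⊆ closedBall 0 r ∧
      (S.card : ℝ) ≤ ((2 * √(Fintype.card ι) + 1) * r / δ + 3) ^ Fintype.card ι ∧
      IsCover δ (closedBall 0 r) (S : Set (EuclideanSpace ℝ ι)) := by
  classical
  set L : ℝ≥0 := (Fintype.card ι : ℝ≥0) ^ (1 / (2 : ENNReal)).toReal
  have hL : (L : ℝ) = √(Fintype.card ι) := by
    simp [L, Real.sqrt_eq_rpow]
  -- the `+ 1` keeps `ε` positive when `ι` is empty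
  set ε : ℝ≥0 := δ / (2 * L + 1)
  obtain ⟨T, hTcard, hT⟩ := exists_finset_isCover_closedBall_pi ι hr (ε := ε) (by positivity)
  have hTimage : IsCover (L * ε) (closedBall (0 : EuclideanSpace ℝ ι) r)
      ((T.image (WithLp.toLp 2) : Finset (EuclideanSpace ℝ ι)) : Set (EuclideanSpace ℝ ι)) := by
    rw [Finset.coe_image]
    exact (hT.image_lipschitz (PiLp.lipschitzWith_toLp 2 _)).anti
      (EuclideanSpace.closedBall_zero_subset_image_toLp ι r)
  obtain ⟨S, hSball, hScard, hS⟩ := hTimage.exists_finset_subset_two_mul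
  refine ⟨S, hSball, ?_, hS.mono_radius ?_⟩
  · have hrε : r / ε = (2 * √(Fintype.card ι) + 1) * r / δ := by
      simp only [ε, NNReal.coe_div, NNReal.coe_add, NNReal.coe_mul, hL]
      push_cast
      field_simp
    calc (S.card : ℝ) ≤ T.card := by exact_mod_cast hScard.trans Finset.card_image_le
      _ ≤ _ := hrε ▸ hTcard
  · calc 2 * (L * ε) = 2 * L / (2 * L + 1) * δ := by simp only [ε]; ring
      _ ≤ 1 * δ := by gcongr; exact (div_le_one (by positivity)).mpr (by simp)
      _ = δ := one_mul δ

lemma abs_kernel_sub_le {E : Type*} [SeminormedAddCommGroup E] {K : ℝ → ℝ} {β c h : ℝ}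
    (hβ : 0 ≤ β) (hc : 0 ≤ c) (hh : 0 < h) (n : ℕ)
    (hK : ∀ s t : ℝ, 0 ≤ s → 0 ≤ t → |K s - K t| ≤ c * |s - t| ^ β) (x x' y : E) :
    |(h ^ n)⁻¹ * K (‖x - y‖ / h) - (h ^ n)⁻¹ * K (‖x' - y‖ / h)| ≤
      c * h ^ (-(β + n)) * ‖x - x'‖ ^ β := by
  have hdist : |‖x - y‖ / h - ‖x' - y‖ / h| ≤ ‖x - x'‖ / h := by
    rw [div_sub_div_same, abs_div, abs_of_pos hh]
    gcongr
    simpa using abs_norm_sub_norm_le (x - y) (x' - y)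
  calc |(h ^ n)⁻¹ * K (‖x - y‖ / h) - (h ^ n)⁻¹ * K (‖x' - y‖ / h)|
      = (h ^ n)⁻¹ * |K (‖x - y‖ / h) - K (‖x' - y‖ / h)| := by
        rw [← mul_sub, abs_mul, abs_of_pos (by positivity)]
    _ ≤ (h ^ n)⁻¹ * (c * (‖x - x'‖ / h) ^ β) := by
        grw [hK _ _ (by positivity) (by positivity), hdist]
    _ = c * h ^ (-(β + n)) * ‖x - x'‖ ^ β := by
        rw [Real.div_rpow (norm_nonneg _) hh.le, Real.rpow_neg hh.le,
          Real.rpow_add hh, Real.rpow_natCast]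
        field_simp

lemma exists_finset_kernel_net (d : ℕ) {K : ℝ → ℝ} {β c : ℝ} (hβ : 0 ≤ β) (hc : 0 ≤ c)
    (hK : ∀ s t : ℝ, 0 ≤ s → 0 ≤ t → |K s - K t| ≤ c * |s - t| ^ β)
    {h r δ : ℝ} (hh : 0 < h) (hr : 0 ≤ r) (hδ : 0 < δ) :
    ∃ S : Finset (EuclideanSpace ℝ (Fin d)),
      (S.card : ℝ) ≤ ((2 * √d + 1) * r / δ + 3) ^ d ∧ (∀ x' ∈ S, ‖x'‖ ≤ r) ∧
      ∀ x : EuclideanSpace ℝ (Fin d), ‖x‖ ≤ r → ∃ x' ∈ S, ∀ y : EuclideanSpace ℝ (Fin d),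
        |(h ^ d)⁻¹ * K (‖x - y‖ / h) - (h ^ d)⁻¹ * K (‖x' - y‖ / h)| ≤
          c * h ^ (-(β + d)) * δ ^ β := by
  lift δ to ℝ≥0 using hδ.le
  obtain ⟨S, hSball, hScard, hS⟩ :=
    EuclideanSpace.exists_finset_subset_closedBall_isCover (Fin d) hr (NNReal.coe_pos.mp hδ)
  refine ⟨S, by simpa using hScard, fun x' hx' => mem_closedBall_zero_iff.mp (hSball hx'),
    fun x hx => ?_⟩
  obtain ⟨x', hx'S, hxx'⟩ : ∃ x' ∈ S, dist x x' ≤ δ := by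
    simpa using hS.subset_iUnion_closedBall (mem_closedBall_zero_iff.mpr hx)
  refine ⟨x', hx'S, fun y => (abs_kernel_sub_le hβ hc hh d hK x x' y).trans ?_⟩
  rw [← dist_eq_norm]
  gcongr

noncomputable def kernelNetRadius (d : ℕ) (β c h ε : ℝ) : ℝ :=
  (ε / (c * h ^ (-(β + d)))) ^ β⁻¹

section kernelNetRadius

variable {d : ℕ} {β c h ε : ℝ}

lemma kernelNetRadius_pos (hc : 0 < c) (hh : 0 < h) (hε : 0 < ε) :
    0 < kernelNetRadius d β c h ε := by
  unfold kernelNetRadius; positivity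

lemma mul_kernelNetRadius_rpow (hβ : β ≠ 0) (hc : 0 < c) (hh : 0 < h) (hε : 0 < ε) :
    c * h ^ (-(β + d)) * kernelNetRadius d β c h ε ^ β = ε := by
  rw [kernelNetRadius, ← Real.rpow_mul (by positivity), inv_mul_cancel₀ hβ, Real.rpow_one]
  field_simp

lemma kernelNetRadius_le (hβ : 0 < β) (hc : 0 < c) (hh : 0 < h) (hh1 : h ≤ 1) (hε : 0 < ε)
    (hε1 : ε ≤ 1) : kernelNetRadius d β c h ε ≤ c⁻¹ ^ β⁻¹ := by
  refine Real.rpow_le_rpow (by positivity) ?_ (by positivity)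
  have hh_pow : h ^ (β + d) ≤ 1 := Real.rpow_le_one hh.le hh1 (by positivity)
  calc ε / (c * h ^ (-(β + d))) = c⁻¹ * (ε * h ^ (β + d)) := by
        rw [Real.rpow_neg hh.le]; field_simp
    _ ≤ c⁻¹ * (1 * 1) := by gcongr
    _ = c⁻¹ := by ring

lemma inv_kernelNetRadius_pow (hβ : β ≠ 0) (hc : 0 < c) (hh : 0 < h) (hε : 0 < ε) :
    (kernelNetRadius d β c h ε)⁻¹ ^ d =
      c ^ ((d : ℝ) / β) * h ^ (-((d : ℝ) + d ^ 2 / β)) * ε ^ (-((d : ℝ) / β)) := by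
  have hexp : -(β + d) * (d / β) = -((d : ℝ) + d ^ 2 / β) := by field_simp
  rw [kernelNetRadius, ← Real.rpow_natCast, ← Real.inv_rpow (by positivity), inv_div,
    ← Real.rpow_mul (by positivity), inv_mul_eq_div, Real.div_rpow (by positivity) hε.le,
    Real.mul_rpow hc.le (by positivity), ← Real.rpow_mul hh.le, hexp, Real.rpow_neg hε.le,
    div_eq_mul_inv]

end kernelNetRadius

lemma add_three_le_mul_inv {a C r δ : ℝ} (hC : 0 ≤ C) (hr : 1 ≤ r) (hδ : 0 < δ) (hδC : δ ≤ C) :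
    a * r / δ + 3 ≤ (a + 3 * C) * r * δ⁻¹ := by
  have : 1 ≤ C * r / δ := (one_le_div hδ).mpr (hδC.trans (le_mul_of_one_le_right hC hr))
  calc a * r / δ + 3 ≤ a * r / δ + 3 * (C * r / δ) := by linarith
    _ = (a + 3 * C) * r * δ⁻¹ := by ring

theorem stmt10_general (d : ℕ) (K : ℝ → ℝ) (β c : ℝ)
    (hβ : 0 < β) (hc : 0 < c)
    (hK_hoelder : ∀ s t : ℝ, 0 ≤ s → 0 ≤ t → |K s - K t| ≤ c * |s - t| ^ β) :
    ∃ c' > 0, ∀ (h r : ℝ), 0 < h → h ≤ 1 → 1 ≤ r → ∀ ε : ℝ, 0 < ε → ε ≤ 1 →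
      ∃ S : Finset (EuclideanSpace ℝ (Fin d)),
        (S.card : ℝ) ≤ c' * r ^ d * h ^ (-((d : ℝ) + d ^ 2 / β)) * ε ^ (-((d : ℝ) / β)) ∧
        (∀ x' ∈ S, ‖x'‖ ≤ r) ∧
        ∀ x : EuclideanSpace ℝ (Fin d), ‖x‖ ≤ r →
          ∃ x' ∈ S, ∀ y : EuclideanSpace ℝ (Fin d),
            |(h ^ d)⁻¹ * K (‖x - y‖ / h) - (h ^ d)⁻¹ * K (‖x' - y‖ / h)| ≤ ε := by
  refine ⟨(2 * √d + 1 + 3 * c⁻¹ ^ β⁻¹) ^ d * c ^ ((d : ℝ) / β), by positivity, ?_⟩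
  intro h r hh hh1 hr ε hε hε1
  set δ := kernelNetRadius d β c h ε
  have hδ : 0 < δ := kernelNetRadius_pos hc hh hε
  obtain ⟨S, hScard, hSball, hSnet⟩ :=
    exists_finset_kernel_net d hβ.le hc.le hK_hoelder hh (zero_le_one.trans hr) hδ
  refine ⟨S, hScard.trans ?_, hSball, fun x hx => ?_⟩
  · grw [add_three_le_mul_inv (by positivity) hr hδ (kernelNetRadius_le hβ hc hh hh1 hε hε1),
      mul_pow, mul_pow, inv_kernelNetRadius_pow hβ.ne' hc hh hε]
    exact le_of_eq (by ring)
  · exact mul_kernelNetRadius_rpow hβ.ne' hc hh hε ▸ hSnet x hx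

/-- Covering number bound for the set `K_{h,r} = {k_{x,h} : x ∈ B_r}` in `L_∞`:
there is `c' > 0` (independent of `ε`, `h`, `r`) such that for all `ε ∈ (0,1]`,
`N(K_{h,r}, ‖·‖_∞, ε) ≤ c' r^d h^{-d - d²/β} ε^{-d/β}`, expressed via finite
`ε`-nets of kernel translates with respect to the supremum distance. -/
theorem stmt10 (d : ℕ) (hd : 1 ≤ d) (K : ℝ → ℝ) (β c : ℝ)
    (hβ : 0 < β) (hβ1 : β ≤ 1) (hc : 0 < c)
    (hK_nonneg : ∀ r, 0 ≤ K r)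
    (hK_bdd : ∃ M, ∀ r, K r ≤ M)
    (hK_anti : AntitoneOn K (Set.Ici (0 : ℝ)))
    (hK_hoelder : ∀ s t : ℝ, 0 ≤ s → 0 ≤ t → |K s - K t| ≤ c * |s - t| ^ β) :
    ∃ c' > 0, ∀ (h r : ℝ), 0 < h → h ≤ 1 → 1 ≤ r → ∀ ε : ℝ, 0 < ε → ε ≤ 1 →
      ∃ S : Finset (EuclideanSpace ℝ (Fin d)),
        (S.card : ℝ) ≤ c' * r ^ d * h ^ (-((d : ℝ) + d ^ 2 / β)) * ε ^ (-((d : ℝ) / β)) ∧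
        (∀ x' ∈ S, ‖x'‖ ≤ r) ∧
        ∀ x : EuclideanSpace ℝ (Fin d), ‖x‖ ≤ r →
          ∃ x' ∈ S, ∀ y : EuclideanSpace ℝ (Fin d),
            |(h ^ d)⁻¹ * K (‖x - y‖ / h) - (h ^ d)⁻¹ * K (‖x' - y‖ / h)| ≤ ε :=
  stmt10_general d K β c hβ hc hK_hoelder
end
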